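/- (Theorem 3.1, Conditional DDIM inversion) Let $t \ge 1$, let $(\alpha_i)_{i=0}^t$ be reals with $0 < \alpha_i \le 1$ and $\alpha_0 = 1$, and define $\bar\alpha_i = \prod_{j=0}^{i}\alpha_j$. Let $g_i \in \mathbb{R}^d$ (playing the role of $\nabla_{x_i}\log p_\theta(x_i \mid y)$) and suppose the noise predictions satisfy $e_i = -\sqrt{1-\bar\alpha_i}\, g_{i-1} + \delta_i$ for vectors $\delta_i \in \mathbb{R}^d$, $1 \le i \le t$. If $(x_i)$ satisfies the inversion recursion $x_i = \sqrt{\alpha_i/\alpha_{i-1}}\, x_{i-1} + \sqrt{\alpha_i}\left(\sqrt{1/\alpha_i-1} - \sqrt{1/\alpha_{i-1}-1}\right) e_i$, then with $s_i := \sqrt{\alpha_t(1-\bar\alpha_{i+1})}\left(\sqrt{1/\alpha_{i+1}-1} - \sqrt{1/\alpha_i-1}\right)$ for $0 \le i \le t-1$, one has $x_t = \sqrt{\alpha_t}\, x_0 - \sum_{i=0}^{t-1} s_i\, g_i + \sum_{i=0}^{t-1} \frac{s_i}{\sqrt{1-\bar\alpha_{i+1}}}\, \delta_{i+1}$, provided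 $\bar\alpha_{i+1} < 1$ for all $0 \le i \le t-1$. -/

import Mathlib

open Finset

/-! Since √(α_i / α_{i-1}) = √α_i / √α_{i-1}, dividing the recursion by √α_i makes it telescope:
x_t = √α_t x_0 + √α_t ∑ c_i e_{i+1} with c_i = √(1/α_{i+1} - 1) - √(1/α_i - 1). Substituting
e_{i+1} = -√(1 - ᾱ_{i+1}) g_i + δ_{i+1} and writing s_i = √α_t √(1 - ᾱ_{i+1}) c_i splits each
term into -s_i g_i and the correction; ᾱ_{i+1} < 1 makes the division by √(1 - ᾱ_{i+1}) exact. -/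

theorem eq_div_smul_add_smul_sum_of_scaled_recursion {K E : Type*} [Field K] [AddCommGroup E]
    [Module K E] (r : ℕ → K) (x v : ℕ → E) (n : ℕ) (hr : ∀ i ≤ n, r i ≠ 0)
    (hx : ∀ i < n, x (i + 1) = (r (i + 1) / r i) • x i + r (i + 1) • v i) :
    x n = (r n / r 0) • x 0 + r n • ∑ i ∈ range n, v i := by
  induction n with
  | zero => simp [div_self (hr 0 le_rfl)]
  | succ n ih =>
    have hrn : r n ≠ 0 := hr n n.le_succ
    rw [hx n n.lt_succ_self, ih (fun i hi => hr i (by omega)) (fun i hi => hx i (by omega)),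
      sum_range_succ, smul_add, smul_add, smul_smul, smul_smul, div_mul_div_cancel₀ hrn,
      div_mul_cancel₀ _ hrn, add_assoc]

theorem smul_neg_smul_add_eq {E : Type*} [AddCommGroup E] [Module ℝ E] {a b c : ℝ} (hb : b ≠ 0)
    (g δ : E) : (a * c) • (-b • g + δ) = -((a * b * c) • g) + (a * b * c / b) • δ := by
  rw [mul_right_comm, mul_div_cancel_right₀ _ hb, smul_add, smul_smul, ← neg_smul]
  congr 2
  ring

theorem conditional_ddim_inversion_general (d t : ℕ) (α : ℕ → ℝ)
    (hαpos : ∀ i ≤ t, 0 < α i) (hα0 : α 0 = 1)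
    (ᾱ : ℕ → ℝ)
    (hᾱlt : ∀ i ≤ t - 1, ᾱ (i + 1) < 1)
    (g δ e : ℕ → Fin d → ℝ)
    (he : ∀ i, 1 ≤ i → i ≤ t →
      e i = (-Real.sqrt (1 - ᾱ i)) • g (i - 1) + δ i)
    (x : ℕ → Fin d → ℝ)
    (hrec : ∀ i, 1 ≤ i → i ≤ t →
      x i = Real.sqrt (α i / α (i - 1)) • x (i - 1) +
        (Real.sqrt (α i) *
          (Real.sqrt (1 / α i - 1) - Real.sqrt (1 / α (i - 1) - 1))) • e i)
    (s : ℕ → ℝ)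
    (hs : ∀ i ≤ t - 1,
      s i = Real.sqrt (α t * (1 - ᾱ (i + 1))) *
        (Real.sqrt (1 / α (i + 1) - 1) - Real.sqrt (1 / α i - 1))) :
    x t = Real.sqrt (α t) • x 0 - ∑ i ∈ range t, s i • g i +
      ∑ i ∈ range t, (s i / Real.sqrt (1 - ᾱ (i + 1))) • δ (i + 1) := by
  set c : ℕ → ℝ := fun i => Real.sqrt (1 / α (i + 1) - 1) - Real.sqrt (1 / α i - 1)
  have hclosed := eq_div_smul_add_smul_sum_of_scaled_recursion (fun i => Real.sqrt (α i)) x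
    (fun i => c i • e (i + 1)) t (fun i hi => (Real.sqrt_pos.2 (hαpos i hi)).ne') fun i hi => by
      rw [hrec (i + 1) (by omega) hi, Nat.add_sub_cancel, Real.sqrt_div' _ (hαpos i (by omega)).le,
        mul_smul]
  have hterm : ∀ i ∈ range t, Real.sqrt (α t) • c i • e (i + 1) =
      -(s i • g i) + (s i / Real.sqrt (1 - ᾱ (i + 1))) • δ (i + 1) := by
    intro i hi
    have hit : i < t := mem_range.1 hi
    rw [hs i (by omega), Real.sqrt_mul (hαpos t le_rfl).le, he (i + 1) (by omega) hit,
      Nat.add_sub_cancel, smul_smul]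
    exact smul_neg_smul_add_eq (Real.sqrt_pos.2 (by linarith [hᾱlt i (by omega)])).ne' _ _
  rw [hclosed, hα0, Real.sqrt_one, div_one, smul_sum, sum_congr rfl hterm, sum_add_distrib,
    sum_neg_distrib, sub_eq_add_neg, add_assoc]

/-- Theorem 3.1 (abstract): conditional DDIM inversion moves the data point along the
negative gradient directions, up to correction terms. -/
theorem conditional_ddim_inversion (d t : ℕ) (ht : 1 ≤ t) (α : ℕ → ℝ)
    (hαpos : ∀ i ≤ t, 0 < α i) (hα1 : ∀ i ≤ t, α i ≤ 1) (hα0 : α 0 = 1)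
    (ᾱ : ℕ → ℝ) (hᾱ : ∀ i, ᾱ i = ∏ j ∈ range (i + 1), α j)
    (hᾱlt : ∀ i ≤ t - 1, ᾱ (i + 1) < 1)
    (g δ e : ℕ → Fin d → ℝ)
    (he : ∀ i, 1 ≤ i → i ≤ t →
      e i = (-Real.sqrt (1 - ᾱ i)) • g (i - 1) + δ i)
    (x : ℕ → Fin d → ℝ)
    (hrec : ∀ i, 1 ≤ i → i ≤ t →
      x i = Real.sqrt (α i / α (i - 1)) • x (i - 1) +
        (Real.sqrt (α i) *
          (Real.sqrt (1 / α i - 1) - Real.sqrt (1 / α (i - 1) - 1))) • e i)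
    (s : ℕ → ℝ)
    (hs : ∀ i ≤ t - 1,
      s i = Real.sqrt (α t * (1 - ᾱ (i + 1))) *
        (Real.sqrt (1 / α (i + 1) - 1) - Real.sqrt (1 / α i - 1))) :
    x t = Real.sqrt (α t) • x 0 - ∑ i ∈ range t, s i • g i +
      ∑ i ∈ range t, (s i / Real.sqrt (1 - ᾱ (i + 1))) • δ (i + 1) :=
  conditional_ddim_inversion_general d t α hαpos hα0 ᾱ hᾱlt g δ e he x hrec s hs
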